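/- arXiv:1103.1529 — 7 statements merged into one kernel-verified Lean document; each statement's English description precedes it below -/
import Mathlib

section
/- Fix p ∈ [0,1] and n ∈ ℕ. Let t : Ω → [0, +∞) be a function that depends only on the first n coordinates of its argument, and suppose that ∫ t(ω) dQ(ω) ≤ 1 for every Borel probability measure Q on Ω with Q ≼ B_p. Define the monotonization t̂(ω) = sup { t(ω') : ω' ∈ Ω, ω' ≤ ω }. Then ∫ t̂(ω) dB_p(ω) ≤ 1. -/
open MeasureTheory
open scoped ENNReal

/-- `Q` can be coupled below `P`: there is a probability measure `R` on `Ω × Ω`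
with first marginal `Q`, second marginal `P`, concentrated on pairs `(ω, ω')`
with `ω ≤ ω'` coordinatewise. -/
def CoupledBelow (Q P : Measure (ℕ → Bool)) : Prop :=
  ∃ R : Measure ((ℕ → Bool) × (ℕ → Bool)), IsProbabilityMeasure R ∧
    R.map Prod.fst = Q ∧ R.map Prod.snd = P ∧
    R {q : (ℕ → Bool) × (ℕ → Bool) | q.1 ≤ q.2} = 1

/-- `B` is the Bernoulli measure with parameter `p` on Cantor space:
coordinates are independent and each equals `true` with probability `p`. -/
def IsBernoulli (p : ℝ) (B : Measure (ℕ → Bool)) : Prop :=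
  IsProbabilityMeasure B ∧
  ∀ (s : Finset ℕ) (b : ℕ → Bool),
    B {ω : ℕ → Bool | ∀ i ∈ s, ω i = b i} =
      ∏ i ∈ s, (if b i then ENNReal.ofReal p else ENNReal.ofReal (1 - p))

/-!
Since `t` depends only on finitely many coordinates, it takes finitely many values, so the
supremum defining `t̂ ω` is attained at some `ω' ≤ ω`; making this choice through the first `n`
coordinates of `ω` only gives a measurable `g ≤ id` with `t̂ = t ∘ g`. Then `g_* B` is coupled
below `B` through `(g, id)_* B`, and `∫ t̂ dB = ∫ t d(g_* B) ≤ 1`.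
-/

open Set Function

theorem exists_le_apply_eq_iSup₂ {γ β : Type*} [Preorder γ] [CompleteLinearOrder β] {f : γ → β}
    (hf : (range f).Finite) (x : γ) : ∃ y ≤ x, f y = ⨆ (z : γ) (_ : z ≤ x), f z := by
  have hmem : sSup (f '' Iic x) ∈ f '' Iic x :=
    Nonempty.csSup_mem ⟨f x, x, le_rfl, rfl⟩ (hf.subset (image_subset_range f _))
  rw [sSup_image] at hmem
  exact hmem

section DependsOn

variable {ι α β : Type*} {s : Set ι} {f : (ι → α) → β}

theorem DependsOn.measurable [MeasurableSpace α] [Countable α] [MeasurableSingletonClass α]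
    [MeasurableSpace β] [Nonempty β] [Finite s] (hf : DependsOn f s) : Measurable f := by
  obtain ⟨F, rfl⟩ := dependsOn_iff_exists_comp.1 hf
  exact (measurable_of_countable F).comp (measurable_pi_lambda _ fun i => measurable_pi_apply _)

theorem DependsOn.finite_range [Finite α] [Nonempty β] [Finite s] (hf : DependsOn f s) :
    (range f).Finite := by
  obtain ⟨F, rfl⟩ := dependsOn_iff_exists_comp.1 hf
  exact (finite_range F).subset (range_comp_subset_range _ F)

variable [Preorder α] [OrderBot α] [DecidablePred (· ∈ s)]

theorem piecewise_bot_le (ω : ι → α) : s.piecewise ω ⊥ ≤ ω :=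
  piecewise_le (fun _ _ => le_rfl) fun _ _ => bot_le

theorem dependsOn_piecewise_bot : DependsOn (fun ω : ι → α => s.piecewise ω ⊥) s :=
  fun ω ω' h => funext fun i => by by_cases hi : i ∈ s <;> simp [hi, h i]

/-- Zeroing the coordinates outside `s` does not change `f`, and turns any `η ≤ ω` into
`s.piecewise η ⊥`, which lies below every function that agrees with `ω` on `s`. -/
theorem DependsOn.iSup_of_le [CompleteLattice β] (hf : DependsOn f s) :
    DependsOn (fun ω => ⨆ (ω' : ι → α) (_ : ω' ≤ ω), f ω') s := by
  suffices key : ∀ ω ω' : ι → α, (∀ i ∈ s, ω i = ω' i) →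
      ⨆ (η : ι → α) (_ : η ≤ ω), f η ≤ ⨆ (η : ι → α) (_ : η ≤ ω'), f η from
    fun ω ω' h => le_antisymm (key ω ω' h) (key ω' ω fun i hi => (h i hi).symm)
  intro ω ω' h
  refine iSup₂_le fun η hη => le_iSup₂_of_le (s.piecewise η ⊥) ?_ ?_
  · exact piecewise_le (fun i hi => h i hi ▸ hη i) fun _ _ => bot_le
  · exact (hf fun i hi => piecewise_eq_of_mem _ _ _ hi).ge

theorem DependsOn.exists_measurable_le_apply_eq_iSup₂ [MeasurableSpace α] [Finite α]
    [MeasurableSingletonClass α] [Finite s] [CompleteLinearOrder β] (hf : DependsOn f s) :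
    ∃ g : (ι → α) → ι → α, Measurable g ∧ (∀ ω, g ω ≤ ω) ∧
      ∀ ω, f (g ω) = ⨆ (ω' : ι → α) (_ : ω' ≤ ω), f ω' := by
  choose g hg_le hg_eq using exists_le_apply_eq_iSup₂ hf.finite_range
  have hdep : DependsOn (fun ω => g (s.piecewise ω ⊥)) s :=
    fun ω ω' h => congrArg g (dependsOn_piecewise_bot h)
  refine ⟨_, hdep.measurable, fun ω => (hg_le _).trans (piecewise_bot_le ω), fun ω => ?_⟩
  exact (hg_eq _).trans (hf.iSup_of_le fun i hi => piecewise_eq_of_mem _ _ _ hi)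

end DependsOn

theorem coupledBelow_map_of_le {B : Measure (ℕ → Bool)} [IsProbabilityMeasure B]
    {g : (ℕ → Bool) → ℕ → Bool} (hg : Measurable g) (hle : ∀ ω, g ω ≤ ω) :
    CoupledBelow (B.map g) B := by
  have hpair : Measurable fun ω => (g ω, ω) := hg.prodMk measurable_id
  refine ⟨B.map fun ω => (g ω, ω), Measure.isProbabilityMeasure_map hpair.aemeasurable, ?_, ?_, ?_⟩
  · rw [Measure.map_map measurable_fst hpair]; rfl
  · rw [Measure.map_map measurable_snd hpair]; exact Measure.map_id
  · refine le_antisymm prob_le_one ?_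
    calc (1 : ℝ≥0∞) = B ((fun ω => (g ω, ω)) ⁻¹' {q | q.1 ≤ q.2}) := by
          simp [preimage, hle, measure_univ]
      _ ≤ _ := Measure.le_map_apply hpair.aemeasurable _

theorem monotonization_general (p : ℝ) (n : ℕ)
    (B : Measure (ℕ → Bool)) (hB : IsBernoulli p B)
    (t : (ℕ → Bool) → ℝ≥0∞)
    (hdep : ∀ ω ω' : ℕ → Bool, (∀ i < n, ω i = ω' i) → t ω = t ω')
    (hint : ∀ Q : Measure (ℕ → Bool), IsProbabilityMeasure Q → CoupledBelow Q B →
      ∫⁻ ω, t ω ∂Q ≤ 1) :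
    ∫⁻ ω, (⨆ (ω' : ℕ → Bool) (_ : ω' ≤ ω), t ω') ∂B ≤ 1 := by
  have := hB.1
  have ht : DependsOn t (Iio n) := hdep
  obtain ⟨g, hg, hle, hsup⟩ := ht.exists_measurable_le_apply_eq_iSup₂
  calc ∫⁻ ω, (⨆ (ω' : ℕ → Bool) (_ : ω' ≤ ω), t ω') ∂B = ∫⁻ ω, t (g ω) ∂B :=
        lintegral_congr fun ω => (hsup ω).symm
    _ = ∫⁻ ω, t ω ∂B.map g := (lintegral_map ht.measurable hg).symm
    _ ≤ 1 :=
      hint _ (Measure.isProbabilityMeasure_map hg.aemeasurable) (coupledBelow_map_of_le hg hle)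

/-- Monotonization lemma: if `t` depends only on the first `n` coordinates and
`∫ t dQ ≤ 1` for every probability measure `Q` coupled below the Bernoulli
measure `B_p`, then the monotonization `t̂(ω) = sup {t(ω') : ω' ≤ ω}` satisfies
`∫ t̂ dB_p ≤ 1`. -/
theorem monotonization (p : ℝ) (hp0 : 0 ≤ p) (hp1 : p ≤ 1) (n : ℕ)
    (B : Measure (ℕ → Bool)) (hB : IsBernoulli p B)
    (t : (ℕ → Bool) → ℝ≥0∞) (htfin : ∀ ω, t ω ≠ ∞)
    (hdep : ∀ ω ω' : ℕ → Bool, (∀ i < n, ω i = ω' i) → t ω = t ω')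
    (hint : ∀ Q : Measure (ℕ → Bool), IsProbabilityMeasure Q → CoupledBelow Q B →
      ∫⁻ ω, t ω ∂Q ≤ 1) :
    ∫⁻ ω, (⨆ (ω' : ℕ → Bool) (_ : ω' ≤ ω), t ω') ∂B ≤ 1 :=
  monotonization_general p n B hB t hdep hint
end

section
/- For every Borel probability measure P on Ω, the set S_P = { Q : Q is a Borel probability measure on Ω with Q ≼ P } is a closed, and hence compact, subset of the space of Borel probability measures on Ω equipped with the topology of weak convergence. -/
open MeasureTheory
open scoped ENNReal

/-!
`S_P` is the image, under the first-marginal map, of the set of measures `R` on `Ω × Ω` with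
second marginal `P` that are carried by the closed set `{ω ≤ ω'}`. By the portmanteau theorem
that set is closed in the space of probability measures on the compact space `Ω × Ω`, which is
compact (Prokhorov). The marginal map is continuous, so `S_P` is compact, and it is closed
because the weak topology is Hausdorff.
-/

open Filter Topology

instance Bool.orderClosedTopology : OrderClosedTopology Bool := ⟨isClosed_discrete _⟩

namespace MeasureTheory.ProbabilityMeasure

lemma isClosed_setOf_apply_eq_one {X : Type*} [TopologicalSpace X] [MeasurableSpace X]
    [OpensMeasurableSpace X] [HasOuterApproxClosed X] {F : Set X} (hF : IsClosed F) :
    IsClosed {μ : ProbabilityMeasure X | (μ : Measure X) F = 1} := by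
  set S := {μ : ProbabilityMeasure X | (μ : Measure X) F = 1}
  refine isClosed_iff_clusterPt.2 fun μ hμ => ?_
  have hlim : Tendsto id (𝓝 μ ⊓ 𝓟 S) (𝓝 μ) := tendsto_inf_left tendsto_id
  have hone : limsup (fun ν : ProbabilityMeasure X => (ν : Measure X) F) (𝓝 μ ⊓ 𝓟 S) = 1 := by
    have := hμ.neBot
    have hS : ∀ᶠ ν : ProbabilityMeasure X in 𝓝 μ ⊓ 𝓟 S, (ν : Measure X) F = 1 :=
      mem_inf_of_right (mem_principal_self S)
    rw [limsup_congr hS, limsup_const]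
  exact le_antisymm prob_le_one (hone ▸ limsup_measure_closed_le_of_tendsto hlim hF)

variable {X Y : Type*} [TopologicalSpace X] [TopologicalSpace.MetrizableSpace X]
  [CompactSpace X] [MeasurableSpace X] [BorelSpace X]
  [TopologicalSpace Y] [TopologicalSpace.MetrizableSpace Y]
  [CompactSpace Y] [MeasurableSpace Y] [BorelSpace Y]

theorem isCompact_setOf_exists_coupling (ν : ProbabilityMeasure Y) {L : Set (X × Y)}
    (hL : IsClosed L) :
    IsCompact {μ : ProbabilityMeasure X | ∃ R : ProbabilityMeasure (X × Y),
      R.map measurable_fst.aemeasurable = μ ∧ R.map measurable_snd.aemeasurable = ν ∧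
        (R : Measure (X × Y)) L = 1} := by
  have hK : IsClosed {R : ProbabilityMeasure (X × Y) |
      R.map measurable_snd.aemeasurable = ν ∧ (R : Measure (X × Y)) L = 1} :=
    (isClosed_singleton.preimage (continuous_map continuous_snd)).inter
      (isClosed_setOf_apply_eq_one hL)
  convert hK.isCompact.image (continuous_map continuous_fst) using 1
  ext μ
  exact exists_congr fun R => and_comm

end MeasureTheory.ProbabilityMeasure

open ProbabilityMeasure in
lemma coupledBelow_iff_exists_probabilityMeasure (Q P : ProbabilityMeasure (ℕ → Bool)) :
    CoupledBelow Q P ↔ ∃ R : ProbabilityMeasure ((ℕ → Bool) × (ℕ → Bool)),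
      R.map measurable_fst.aemeasurable = Q ∧ R.map measurable_snd.aemeasurable = P ∧
        (R : Measure ((ℕ → Bool) × (ℕ → Bool))) {q | q.1 ≤ q.2} = 1 := by
  simp only [← toMeasure_injective.eq_iff, toMeasure_map]
  constructor
  · rintro ⟨R, hR, h⟩
    exact ⟨⟨R, hR⟩, h⟩
  · rintro ⟨R, h⟩
    exact ⟨R, R.prop, h⟩

/-- For every Borel probability measure `P` on Cantor space, the class
`S_P = {Q : Q ≼ P}` is closed (hence compact) in the space of probability
measures with the topology of weak convergence. -/
theorem coupledBelow_isClosed_isCompact (P : ProbabilityMeasure (ℕ → Bool)) :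
    IsClosed {Q : ProbabilityMeasure (ℕ → Bool) |
        CoupledBelow (Q : Measure (ℕ → Bool)) (P : Measure (ℕ → Bool))} ∧
    IsCompact {Q : ProbabilityMeasure (ℕ → Bool) |
        CoupledBelow (Q : Measure (ℕ → Bool)) (P : Measure (ℕ → Bool))} := by
  have hcompact : IsCompact {Q : ProbabilityMeasure (ℕ → Bool) |
      CoupledBelow (Q : Measure (ℕ → Bool)) (P : Measure (ℕ → Bool))} := by
    simpa only [coupledBelow_iff_exists_probabilityMeasure] using
      ProbabilityMeasure.isCompact_setOf_exists_coupling P (isClosed_le continuous_fst continuous_snd)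
  exact ⟨hcompact.isClosed, hcompact⟩
end

section
/- Let N, n, K, k be natural numbers with k ≤ n < N and K ≤ N. Then, in the real numbers, (K·(K−1)⋯(K−k+1)) · ((N−K)·(N−K−1)⋯(N−K−(n−k)+1)) / (N·(N−1)⋯(N−n+1)) ≤ (N/(N−n))^n · (K/N)^k · ((N−K)/N)^{n−k}. Moreover, if N = n² and n ≥ 2, then (N/(N−n))^n ≤ 4, so the probability of drawing any fixed sequence of n colours without replacement from an urn with N balls of which K are black is at most 4 times the corresponding probability with replacement. -/
/-!
Each factor of the falling factorials in the numerator is at most `K` resp. `N - K`, and each of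
the `n` factors of the denominator is at least `N - n`; after cancelling `N ^ n` this is the first
bound. When `N = n ^ 2`, the base `N / (N - n)` is `1 + 1 / (n - 1)`, and `(1 + 1 / m) ^ (m + 1)`
decreases in `m` from its value `4` at `m = 1`.
-/

open Finset

theorem prod_range_natCast_sub_eq_descFactorial {R : Type*} [CommRing R] (a m : ℕ) :
    ∏ i ∈ range m, ((a : R) - i) = a.descFactorial m := by
  rw [← descPochhammer_eval_eq_prod_range, descPochhammer_eval_eq_descFactorial]

theorem Nat.sub_pow_le_descFactorial (n k : ℕ) : (n - k) ^ k ≤ n.descFactorial k :=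
  (Nat.pow_le_pow_left (by omega) k).trans (Nat.pow_sub_le_descFactorial n k)

/-- `1 + 1/m = (1 + 1/(m+1)) (1 + 1/(m(m+2)))`, and Bernoulli's inequality bounds
`(1 + 1/(m(m+2)))^(m+1)` below by `1 + 1/(m+1)`. -/
theorem one_add_inv_pow_succ_succ_le {m : ℕ} (hm : 0 < m) :
    (1 + ((m + 1 : ℕ) : ℝ)⁻¹) ^ (m + 2) ≤ (1 + (m : ℝ)⁻¹) ^ (m + 1) := by
  have hm' : (0 : ℝ) < m := by exact_mod_cast hm
  set x : ℝ := (m * (m + 2))⁻¹ with hx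
  have hx0 : 0 ≤ x := by positivity
  have hratio : 1 + (m : ℝ)⁻¹ = (1 + ((m + 1 : ℕ) : ℝ)⁻¹) * (1 + x) := by
    rw [hx]; push_cast; field_simp; ring
  have hbernoulli : 1 + ((m + 1 : ℕ) : ℝ)⁻¹ ≤ (1 + x) ^ (m + 1) := by
    refine le_trans ?_ (one_add_mul_le_pow (by linarith) (m + 1))
    rw [hx]; push_cast
    rw [add_le_add_iff_left, inv_le_iff_one_le_mul₀ (by positivity)]
    field_simp
    nlinarith
  calc (1 + ((m + 1 : ℕ) : ℝ)⁻¹) ^ (m + 2)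
      = (1 + ((m + 1 : ℕ) : ℝ)⁻¹) ^ (m + 1) * (1 + ((m + 1 : ℕ) : ℝ)⁻¹) := pow_succ _ _
    _ ≤ (1 + ((m + 1 : ℕ) : ℝ)⁻¹) ^ (m + 1) * (1 + x) ^ (m + 1) := by gcongr
    _ = (1 + (m : ℝ)⁻¹) ^ (m + 1) := by rw [← mul_pow, hratio]

theorem one_add_inv_pow_succ_le_four {m : ℕ} (hm : 0 < m) : (1 + (m : ℝ)⁻¹) ^ (m + 1) ≤ 4 := by
  induction m, hm using Nat.le_induction with
  | base => norm_num
  | succ m hm ih => exact (one_add_inv_pow_succ_succ_le hm).trans ih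

theorem without_replacement_le_with_replacement_general (N n K k : ℕ)
    (hkn : k ≤ n) (hnN : n < N) :
    ((∏ i ∈ Finset.range k, ((K : ℝ) - i)) *
        (∏ i ∈ Finset.range (n - k), (((N - K : ℕ) : ℝ) - i))) /
      (∏ i ∈ Finset.range n, ((N : ℝ) - i)) ≤
      ((N : ℝ) / ((N : ℝ) - (n : ℝ))) ^ n *
        ((K : ℝ) / (N : ℝ)) ^ k *
        ((((N - K : ℕ) : ℝ)) / (N : ℝ)) ^ (n - k) ∧
    (N = n ^ 2 → 2 ≤ n → ((N : ℝ) / ((N : ℝ) - (n : ℝ))) ^ n ≤ 4) := by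
  refine ⟨?_, fun hN hn => ?_⟩
  · have hN0 : (N : ℝ) ≠ 0 := by exact_mod_cast (Nat.zero_lt_of_lt hnN).ne'
    have hgap : (0 : ℝ) < N - n := sub_pos.mpr (by exact_mod_cast hnN)
    have hrhs : ((N : ℝ) / (N - n)) ^ n * (K / N) ^ k * ((N - K : ℕ) / N) ^ (n - k) =
        K ^ k * ((N - K : ℕ) : ℝ) ^ (n - k) / (N - n) ^ n := by
      generalize (N : ℝ) - n = d at hgap ⊢
      obtain ⟨j, rfl⟩ := Nat.exists_eq_add_of_le hkn
      rw [Nat.add_sub_cancel_left, div_pow, div_pow, div_pow, pow_add]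
      field_simp
    have hden : ((N : ℝ) - n) ^ n ≤ N.descFactorial n := by
      rw [← Nat.cast_sub hnN.le]; exact_mod_cast Nat.sub_pow_le_descFactorial N n
    simp only [prod_range_natCast_sub_eq_descFactorial, hrhs]
    gcongr
    · exact_mod_cast Nat.descFactorial_le_pow K k
    · exact_mod_cast Nat.descFactorial_le_pow (N - K) (n - k)
  · obtain ⟨m, rfl⟩ := Nat.exists_eq_add_of_le' hn
    have hbase : (N : ℝ) / (N - (m + 2 : ℕ)) = 1 + ((m + 1 : ℕ) : ℝ)⁻¹ := by
      subst hN; push_cast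
      rw [show ((m : ℝ) + 2) ^ 2 - (m + 2) = (m + 2) * (m + 1) by ring]
      field_simp
      ring
    rw [hbase]
    exact one_add_inv_pow_succ_le_four m.succ_pos

/-- Sampling `n` balls without replacement from an urn with `N` balls, `K` of
them black, is (pointwise on sequences) dominated by sampling with replacement,
up to a factor `(N/(N−n))^n`; moreover this factor is at most `4` when
`N = n²` and `n ≥ 2`. The products are real falling factorials. -/
theorem without_replacement_le_with_replacement (N n K k : ℕ)
    (hkn : k ≤ n) (hnN : n < N) (hKN : K ≤ N) :
    ((∏ i ∈ Finset.range k, ((K : ℝ) - i)) *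
        (∏ i ∈ Finset.range (n - k), (((N - K : ℕ) : ℝ) - i))) /
      (∏ i ∈ Finset.range n, ((N : ℝ) - i)) ≤
      ((N : ℝ) / ((N : ℝ) - (n : ℝ))) ^ n *
        ((K : ℝ) / (N : ℝ)) ^ k *
        ((((N - K : ℕ) : ℝ)) / (N : ℝ)) ^ (n - k) ∧
    (N = n ^ 2 → 2 ≤ n → ((N : ℝ) / ((N : ℝ) - (n : ℝ))) ^ n ≤ 4) :=
  without_replacement_le_with_replacement_general N n K k hkn hnN
end

section
/- Let X, Z, Z' be metric spaces with X locally compact and Z compact, let f : Z → Z' be a continuous map whose range is all of Z', and let t : X × Z → [0, +∞] be lower semicontinuous. Then the function t_f : X × Z' → [0, +∞] defined by t_f(x, z') = inf { t(x, z) : z ∈ Z, f(z) = z' } is lower semicontinuous. -/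
open scoped ENNReal
open Topology Filter

/-- If `X` is a locally compact metric space, `Z` a compact metric space,
`f : Z → Z'` a continuous surjection, and `t : X × Z → [0,∞]` lower
semicontinuous, then `t_f(x, z') = inf {t(x, z) : f(z) = z'}` is lower
semicontinuous on `X × Z'`. -/
theorem lsc_inf_over_fibers {X Z Z' : Type*}
    [MetricSpace X] [MetricSpace Z] [MetricSpace Z']
    [LocallyCompactSpace X] [CompactSpace Z]
    (f : Z → Z') (hfc : Continuous f) (hfs : Function.Surjective f)
    (t : X × Z → ℝ≥0∞) (ht : LowerSemicontinuous t) :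
    LowerSemicontinuous (fun q : X × Z' => ⨅ (z : Z) (_ : f z = q.2), t (q.1, z)) := by
  intro q y hy
  simp only at hy
  by_contra hcon
  haveI : Nonempty Z := ⟨(hfs q.2).choose⟩
  obtain ⟨y', hyy', hy'⟩ := exists_between hy
  rw [Filter.not_eventually] at hcon
  simp only [not_lt] at hcon
  have hne : (𝓝 q ⊓ Filter.principal
      {q' : X × Z' | (⨅ (z : Z) (_ : f z = q'.2), t (q'.1, z)) ≤ y}).NeBot :=
    Filter.frequently_iff_neBot.mp hcon
  obtain ⟨u, hu⟩ := Filter.exists_seq_tendsto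
    (𝓝 q ⊓ Filter.principal {q' : X × Z' | (⨅ (z : Z) (_ : f z = q'.2), t (q'.1, z)) ≤ y})
  have hu1 : Filter.Tendsto u Filter.atTop (𝓝 q) := hu.mono_right inf_le_left
  have hu2 : ∀ᶠ n in Filter.atTop, (⨅ (z : Z) (_ : f z = (u n).2), t ((u n).1, z)) ≤ y := by
    have h2 := hu.mono_right inf_le_right
    rw [Filter.tendsto_principal] at h2
    exact h2
  -- eventually there is a point in the fiber with small value
  have hP : ∀ᶠ n in Filter.atTop, ∃ z : Z, f z = (u n).2 ∧ t ((u n).1, z) < y' := by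
    filter_upwards [hu2] with n hn
    have : (⨅ (z : Z) (_ : f z = (u n).2), t ((u n).1, z)) < y' := lt_of_le_of_lt hn hyy'
    simpa [iInf_lt_iff] using this
  classical
  set z : ℕ → Z := fun n =>
    if h : ∃ z : Z, f z = (u n).2 ∧ t ((u n).1, z) < y' then h.choose
    else Classical.arbitrary Z with hzdef
  have hz : ∀ᶠ n in Filter.atTop, f (z n) = (u n).2 ∧ t ((u n).1, z n) < y' := by
    filter_upwards [hP] with n hn
    simpa [hzdef, dif_pos hn] using hn.choose_spec
  obtain ⟨z₀, -, φ, hφ, hzφ⟩ := IsCompact.tendsto_subseq (x := z) isCompact_univ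
    (fun n => Set.mem_univ _)
  have hφt : Filter.Tendsto φ Filter.atTop Filter.atTop := hφ.tendsto_atTop
  have huφ : Filter.Tendsto (u ∘ φ) Filter.atTop (𝓝 q) := hu1.comp hφt
  have hu2' : Filter.Tendsto (fun n => (u (φ n)).2) Filter.atTop (𝓝 q.2) :=
    (continuous_snd.continuousAt.tendsto).comp huφ
  have hz0 : f z₀ = q.2 := by
    have h1 : Filter.Tendsto (fun n => f (z (φ n))) Filter.atTop (𝓝 (f z₀)) :=
      (hfc.continuousAt.tendsto).comp hzφ
    have h2 : Filter.Tendsto (fun n => f (z (φ n))) Filter.atTop (𝓝 q.2) := by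
      refine hu2'.congr' ?_
      filter_upwards [hφt.eventually hz] with n hn
      exact hn.1.symm
    exact tendsto_nhds_unique h1 h2
  -- z₀ is in the fiber, so t(q.1, z₀) ≥ the inf > y'
  have hlb : y' < t (q.1, z₀) := lt_of_lt_of_le hy' (iInf₂_le z₀ hz0)
  have hpair : Filter.Tendsto (fun n => ((u (φ n)).1, z (φ n))) Filter.atTop (𝓝 (q.1, z₀)) := by
    rw [nhds_prod_eq]
    exact ((continuous_fst.continuousAt.tendsto).comp huφ).prodMk hzφ
  have hev : ∀ᶠ n in Filter.atTop, y' < t ((u (φ n)).1, z (φ n)) :=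
    hpair.eventually (ht (q.1, z₀) y' hlb)
  have hev2 : ∀ᶠ n in Filter.atTop, t ((u (φ n)).1, z (φ n)) < y' := by
    filter_upwards [hφt.eventually hz] with n hn
    exact hn.2
  obtain ⟨n, h1, h2⟩ := (hev.and hev2).exists
  exact absurd h1 (not_lt.mpr h2.le)
end

section
/- The set of stationary ergodic Borel probability measures on Ω is a Gδ subset of the space of all Borel probability measures on Ω equipped with the topology of weak convergence, i.e. it is a countable intersection of open sets. -/
/-!
For a measure-preserving `T`, the von Neumann mean ergodic theorem gives
`(1/N) ∑_{n<N} μ(T⁻ⁿ C ∩ C) → ‖Π 1_C‖²`, where `Π` is the orthogonal projection of `L²(μ)`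
onto the `T`-invariant functions. As `⟪Π 1_C, 1⟫ = μ(C)`, this limit is `μ(C)²` iff
`Π 1_C = μ(C)`. For ergodic `T` the invariant functions are the constants, so this holds for
every `C`; conversely, if it holds on a generating π-system then every invariant set `B`
satisfies `μ(C ∩ B) = μ(C) μ(B)` there, hence `μ(B) = μ(B)²`.

The cylinder sets of Cantor space form a countable generating π-system of clopen sets, on which
`μ ↦ μ(C)` is weakly continuous. Invariance is then a closed condition on each cylinder, and
"`μ(C)²` is a cluster value of the averages" a `Gδ` condition; for invariant `μ` the averages
converge, so such a cluster value is their limit.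
-/

open MeasureTheory Filter Set Topology

def shiftMap : (ℕ → Bool) → (ℕ → Bool) := fun ω i => ω (i + 1)

def StationaryMeasure (P : Measure (ℕ → Bool)) : Prop :=
  ∀ A : Set (ℕ → Bool), MeasurableSet A → P (shiftMap ⁻¹' A) = P A

def ErgodicStationaryMeasure (P : Measure (ℕ → Bool)) : Prop :=
  StationaryMeasure P ∧
  ∀ A : Set (ℕ → Bool), MeasurableSet A → shiftMap ⁻¹' A = A → P A = 0 ∨ P A = 1

section Hilbert

variable {E : Type*} [NormedAddCommGroup E] [InnerProductSpace ℝ E]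

theorem ContinuousLinearMap.tendsto_inner_birkhoffAverage_self [CompleteSpace E]
    (U : E →L[ℝ] E) (hU : ‖U‖ ≤ 1) (x : E) :
    Tendsto (fun N ↦ inner ℝ (birkhoffAverage ℝ U _root_.id N x) x) atTop
      (𝓝 (‖(U.eqLocus (1 : E →L[ℝ] E)).starProjection x‖ ^ 2)) := by
  set K := U.eqLocus (1 : E →L[ℝ] E)
  have hself : inner ℝ (K.starProjection x) x = ‖K.starProjection x‖ ^ 2 := by
    simpa using K.re_inner_starProjection_eq_normSq x
  have hlim := (U.tendsto_birkhoffAverage_orthogonalProjection hU x).inner (𝕜 := ℝ)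
    (tendsto_const_nhds (x := x))
  rwa [← Submodule.starProjection_apply, hself] at hlim

theorem Submodule.starProjection_eq_inner_smul_iff {K : Submodule ℝ E}
    [K.HasOrthogonalProjection] {e : E} (heK : e ∈ K) (he : ‖e‖ = 1) (x : E) :
    K.starProjection x = inner ℝ x e • e ↔ ‖K.starProjection x‖ ^ 2 = inner ℝ x e ^ 2 := by
  have hinner : inner ℝ (K.starProjection x) e = inner ℝ x e := by
    rw [inner_starProjection_left_eq_right, starProjection_eq_self_iff.2 heK]
  have hdist : ‖K.starProjection x - inner ℝ x e • e‖ ^ 2 =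
      ‖K.starProjection x‖ ^ 2 - inner ℝ x e ^ 2 := by
    rw [norm_sub_sq_real, inner_smul_right, hinner, norm_smul, he, mul_one, Real.norm_eq_abs,
      sq_abs]
    ring
  rw [← sub_eq_zero (a := K.starProjection x), ← sub_eq_zero (a := ‖_‖ ^ 2), ← hdist]
  simp

end Hilbert

theorem Filter.Tendsto.tendsto_nhds_iff_mapClusterPt {ι X : Type*} [TopologicalSpace X]
    [T2Space X] {F : Filter ι} [F.NeBot] {u : ι → X} {a b : X} (h : Tendsto u F (𝓝 a)) :
    Tendsto u F (𝓝 b) ↔ MapClusterPt b F u :=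
  ⟨Tendsto.mapClusterPt, fun hb ↦ eq_of_nhds_neBot (hb.neBot.mono (inf_le_inf_left _ h)) ▸ h⟩

theorem isGδ_setOf_mapClusterPt {X Y : Type*} [TopologicalSpace X] [PseudoMetricSpace Y]
    {u : X → ℕ → Y} {c : X → Y} (hu : ∀ n, Continuous fun x ↦ u x n) (hc : Continuous c) :
    IsGδ {x | MapClusterPt (c x) atTop (u x)} := by
  have hset : {x | MapClusterPt (c x) atTop (u x)} =
      ⋂ (k : ℕ) (m : ℕ), ⋃ n ≥ m, {x | dist (u x n) (c x) < 1 / (k + 1)} := by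
    ext x
    simp [Metric.nhds_basis_ball_inv_nat_succ.mapClusterPt_iff_frequently, frequently_atTop]
  rw [hset]
  exact .iInter fun k ↦ .iInter fun m ↦
    (isOpen_biUnion fun n _ ↦ isOpen_lt ((hu n).dist hc) continuous_const).isGδ

namespace MeasureTheory

variable {α : Type*} [MeasurableSpace α] {μ : Measure α} {f : α → α}

theorem measurePreserving_iff_forall_measure_preimage_eq [IsFiniteMeasure μ] (hf : Measurable f)
    {𝒞 : Set (Set α)} (hgen : ‹MeasurableSpace α› = MeasurableSpace.generateFrom 𝒞)
    (hpi : IsPiSystem 𝒞) :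
    MeasurePreserving f μ μ ↔ ∀ s ∈ 𝒞, μ (f ⁻¹' s) = μ s := by
  refine ⟨fun h s hs ↦ h.measure_preimage (hgen ▸ .basic s hs : MeasurableSet s).nullMeasurableSet,
    fun h ↦ ⟨hf, ext_of_generate_finite 𝒞 hgen hpi (fun s hs ↦ ?_) ?_⟩⟩
  · rw [Measure.map_apply hf (hgen ▸ .basic s hs), h s hs]
  · rw [Measure.map_apply hf .univ, preimage_univ]

theorem measure_eq_zero_or_one_of_forall_measure_inter_eq_mul [IsProbabilityMeasure μ]
    {𝒞 : Set (Set α)} (hgen : ‹MeasurableSpace α› = MeasurableSpace.generateFrom 𝒞)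
    (hpi : IsPiSystem 𝒞) {B : Set α} (hB : MeasurableSet B)
    (h : ∀ s ∈ 𝒞, μ (s ∩ B) = μ s * μ B) : μ B = 0 ∨ μ B = 1 := by
  have hrestrict : μ.restrict B = μ B • μ :=
    ext_of_generate_finite 𝒞 hgen hpi (fun s hs ↦ by
      rw [Measure.restrict_apply (hgen ▸ .basic s hs), h s hs, Measure.smul_apply, smul_eq_mul,
        mul_comm]) (by simp)
  have hBB : μ B = μ B * μ B := by
    simpa [Measure.restrict_apply hB] using congrArg (· B) hrestrict
  rcases eq_or_ne (μ B) 0 with h0 | h0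
  · exact .inl h0
  · exact .inr ((ENNReal.mul_right_inj h0 (measure_ne_top μ B)).1 (by rw [mul_one, ← hBB])).symm

theorem preErgodic_iff_forall_measure_eq_zero_or_one [IsProbabilityMeasure μ] :
    PreErgodic f μ ↔ ∀ s, MeasurableSet s → f ⁻¹' s = s → μ s = 0 ∨ μ s = 1 := by
  refine ⟨fun h s hs hinv ↦ h.prob_eq_zero_or_one hs hinv, fun h ↦ ⟨fun s hs hinv ↦ ?_⟩⟩
  rw [eventuallyConst_set', ae_eq_empty, ae_eq_univ, prob_compl_eq_zero_iff hs]
  exact h s hs hinv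

namespace L2

theorem inner_indicatorConstLp_one_const_one [IsFiniteMeasure μ] {s : Set α}
    (hs : MeasurableSet s) :
    inner ℝ (indicatorConstLp 2 hs (measure_ne_top μ s) (1 : ℝ)) (Lp.const 2 μ 1) = μ.real s := by
  rw [← indicatorConstLp_univ, L2.inner_indicatorConstLp_one_indicatorConstLp_one, inter_univ,
    RCLike.ofReal_real_eq_id, id_eq]

theorem norm_const_one [IsProbabilityMeasure μ] : ‖Lp.const 2 μ (1 : ℝ)‖ = 1 := by
  simp [Lp.norm_const]

end L2

noncomputable def MeasurePreserving.koopman (hf : MeasurePreserving f μ μ) :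
    Lp ℝ 2 μ →L[ℝ] Lp ℝ 2 μ :=
  (Lp.compMeasurePreservingₗᵢ ℝ f hf).toContinuousLinearMap

-- An `abbrev`, so that the `HasOrthogonalProjection` instance of `eqLocus` applies to it.
noncomputable abbrev MeasurePreserving.invariantSubspace (hf : MeasurePreserving f μ μ) :
    Submodule ℝ (Lp ℝ 2 μ) :=
  hf.koopman.eqLocus (1 : Lp ℝ 2 μ →L[ℝ] Lp ℝ 2 μ)

noncomputable def meanReturnMeasure (f : α → α) (μ : Measure α) (s : Set α) (N : ℕ) : ℝ :=
  (N : ℝ)⁻¹ * ∑ n ∈ Finset.range N, μ.real (f^[n] ⁻¹' s ∩ s)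

namespace MeasurePreserving

variable (hf : MeasurePreserving f μ μ)
include hf

theorem norm_koopman_le : ‖hf.koopman‖ ≤ 1 :=
  LinearIsometry.norm_toContinuousLinearMap_le _

theorem koopman_indicatorConstLp {s : Set α} (hs : MeasurableSet s) (hμs : μ s ≠ ⊤) (c : ℝ) :
    hf.koopman (indicatorConstLp 2 hs hμs c) =
      indicatorConstLp 2 (hs.preimage hf.measurable)
        (by rwa [hf.measure_preimage hs.nullMeasurableSet]) c :=
  rfl

theorem iterate_koopman_indicatorConstLp (n : ℕ) {s : Set α} (hs : MeasurableSet s)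
    (hμs : μ s ≠ ⊤) (c : ℝ) :
    (⇑hf.koopman)^[n] (indicatorConstLp 2 hs hμs c) =
      indicatorConstLp 2 (hs.preimage (hf.measurable.iterate n))
        (by rwa [(hf.iterate n).measure_preimage hs.nullMeasurableSet]) c := by
  induction n with
  | zero => rfl
  | succ n ih => rw [Function.iterate_succ_apply', ih, koopman_indicatorConstLp]; rfl

variable [IsFiniteMeasure μ]

theorem const_mem_invariantSubspace (c : ℝ) : Lp.const 2 μ c ∈ hf.invariantSubspace := by
  rw [LinearMap.mem_eqLocus, ContinuousLinearMap.coe_coe, ← indicatorConstLp_univ,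
    koopman_indicatorConstLp]
  rfl

theorem indicatorConstLp_mem_invariantSubspace {s : Set α} (hs : MeasurableSet s)
    (hinv : f ⁻¹' s = s) (c : ℝ) :
    indicatorConstLp 2 hs (measure_ne_top μ s) c ∈ hf.invariantSubspace := by
  rw [LinearMap.mem_eqLocus, ContinuousLinearMap.coe_coe, koopman_indicatorConstLp]
  simp only [hinv]
  rfl

theorem inner_birkhoffAverage_koopman_indicatorConstLp {s : Set α} (hs : MeasurableSet s)
    (N : ℕ) :
    inner ℝ
      (birkhoffAverage ℝ hf.koopman _root_.id N (indicatorConstLp 2 hs (measure_ne_top μ s) 1))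
      (indicatorConstLp 2 hs (measure_ne_top μ s) (1 : ℝ)) = meanReturnMeasure f μ s N := by
  simp only [birkhoffAverage, birkhoffSum, real_inner_smul_left, sum_inner, id_eq,
    iterate_koopman_indicatorConstLp, L2.inner_indicatorConstLp_one_indicatorConstLp_one,
    RCLike.ofReal_real_eq_id, meanReturnMeasure]

theorem tendsto_meanReturnMeasure {s : Set α} (hs : MeasurableSet s) :
    Tendsto (meanReturnMeasure f μ s) atTop (𝓝 (‖hf.invariantSubspace.starProjection
      (indicatorConstLp 2 hs (measure_ne_top μ s) 1)‖ ^ 2)) :=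
  (hf.koopman.tendsto_inner_birkhoffAverage_self hf.norm_koopman_le _).congr
    (hf.inner_birkhoffAverage_koopman_indicatorConstLp hs)

theorem starProjection_indicatorConstLp_eq_iff [IsProbabilityMeasure μ] {s : Set α}
    (hs : MeasurableSet s) :
    hf.invariantSubspace.starProjection (indicatorConstLp 2 hs (measure_ne_top μ s) 1) =
        μ.real s • Lp.const 2 μ 1 ↔
      ‖hf.invariantSubspace.starProjection (indicatorConstLp 2 hs (measure_ne_top μ s) 1)‖ ^ 2 =
        μ.real s ^ 2 := by
  simpa only [L2.inner_indicatorConstLp_one_const_one] using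
    Submodule.starProjection_eq_inner_smul_iff (hf.const_mem_invariantSubspace 1) L2.norm_const_one
      (indicatorConstLp 2 hs (measure_ne_top μ s) 1)

theorem preErgodic_of_starProjection_indicatorConstLp [IsProbabilityMeasure μ]
    {𝒞 : Set (Set α)} (hgen : ‹MeasurableSpace α› = MeasurableSpace.generateFrom 𝒞)
    (hpi : IsPiSystem 𝒞)
    (h : ∀ s (hs : MeasurableSet s), s ∈ 𝒞 → hf.invariantSubspace.starProjection
      (indicatorConstLp 2 hs (measure_ne_top μ s) 1) = μ.real s • Lp.const 2 μ 1) :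
    PreErgodic f μ := by
  refine preErgodic_iff_forall_measure_eq_zero_or_one.2 fun B hB hinv ↦
    measure_eq_zero_or_one_of_forall_measure_inter_eq_mul hgen hpi hB fun s hs ↦ ?_
  have hsm : MeasurableSet s := hgen ▸ .basic s hs
  have hreal : μ.real (s ∩ B) = μ.real s * μ.real B := calc
    μ.real (s ∩ B) = inner ℝ (indicatorConstLp 2 hsm (measure_ne_top μ s) (1 : ℝ))
        (indicatorConstLp 2 hB (measure_ne_top μ B) 1) := by
      rw [L2.inner_indicatorConstLp_one_indicatorConstLp_one, RCLike.ofReal_real_eq_id, id_eq]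
    _ = inner ℝ (hf.invariantSubspace.starProjection
          (indicatorConstLp 2 hsm (measure_ne_top μ s) 1))
        (indicatorConstLp 2 hB (measure_ne_top μ B) 1) := by
      rw [Submodule.inner_starProjection_left_eq_right, Submodule.starProjection_eq_self_iff.2
        (hf.indicatorConstLp_mem_invariantSubspace hB hinv 1)]
    _ = μ.real s * μ.real B := by
      rw [h s hsm hs, real_inner_smul_left, real_inner_comm,
        L2.inner_indicatorConstLp_one_const_one]
  rwa [← ENNReal.toReal_eq_toReal_iff' (measure_ne_top μ _)
    (ENNReal.mul_ne_top (measure_ne_top μ _) (measure_ne_top μ _)), ENNReal.toReal_mul]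

end MeasurePreserving

namespace Ergodic

variable (h : Ergodic f μ) [IsFiniteMeasure μ]
include h

theorem invariantSubspace_le_span_const :
    h.toMeasurePreserving.invariantSubspace ≤ ℝ ∙ Lp.const 2 μ 1 := by
  intro g hg
  have hfix : Lp.compMeasurePreserving f h.toMeasurePreserving g = g := hg
  have hinv : g ∘ f =ᵐ[μ] g :=
    (Lp.coeFn_compMeasurePreserving g h.toMeasurePreserving).symm.trans (by rw [hfix])
  obtain ⟨c, hc⟩ := h.ae_eq_const_of_ae_eq_comp_ae (Lp.aestronglyMeasurable g) hinv
  refine Submodule.mem_span_singleton.2 ⟨c, Lp.ext ?_⟩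
  filter_upwards [Lp.coeFn_smul c (Lp.const 2 μ (1 : ℝ)),
    Lp.coeFn_const (p := 2) (μ := μ) (1 : ℝ), hc] with x hsmul hone hgx
  rw [hsmul, Pi.smul_apply, hone, hgx]
  simp

theorem starProjection_indicatorConstLp [IsProbabilityMeasure μ] {s : Set α}
    (hs : MeasurableSet s) :
    h.toMeasurePreserving.invariantSubspace.starProjection
      (indicatorConstLp 2 hs (measure_ne_top μ s) 1) = μ.real s • Lp.const 2 μ 1 := by
  refine Submodule.eq_starProjection_of_mem_of_inner_eq_zero
    (Submodule.smul_mem _ _ (h.toMeasurePreserving.const_mem_invariantSubspace 1)) fun w hw ↦ ?_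
  obtain ⟨c, rfl⟩ := Submodule.mem_span_singleton.1 (h.invariantSubspace_le_span_const hw)
  rw [inner_smul_right, inner_sub_left, L2.inner_indicatorConstLp_one_const_one,
    real_inner_smul_left, real_inner_self_eq_norm_sq, L2.norm_const_one]
  ring

end Ergodic

variable [IsProbabilityMeasure μ] {𝒞 : Set (Set α)}
  (hgen : ‹MeasurableSpace α› = MeasurableSpace.generateFrom 𝒞) (hpi : IsPiSystem 𝒞)
include hgen hpi

theorem MeasurePreserving.ergodic_iff_forall_tendsto_meanReturnMeasure
    (hf : MeasurePreserving f μ μ) :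
    Ergodic f μ ↔ ∀ s ∈ 𝒞, Tendsto (meanReturnMeasure f μ s) atTop (𝓝 (μ.real s ^ 2)) := by
  constructor
  · intro he s hs
    have hsm : MeasurableSet s := hgen ▸ .basic s hs
    simpa only [(hf.starProjection_indicatorConstLp_eq_iff hsm).1
      (he.starProjection_indicatorConstLp hsm)] using hf.tendsto_meanReturnMeasure hsm
  · intro h
    refine ⟨hf, hf.preErgodic_of_starProjection_indicatorConstLp hgen hpi fun s hsm hs ↦ ?_⟩
    exact (hf.starProjection_indicatorConstLp_eq_iff hsm).2
      (tendsto_nhds_unique (hf.tendsto_meanReturnMeasure hsm) (h s hs))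

theorem ergodic_iff_forall_mapClusterPt_meanReturnMeasure (hf : Measurable f) :
    Ergodic f μ ↔ (∀ s ∈ 𝒞, μ.real (f ⁻¹' s) = μ.real s) ∧
      ∀ s ∈ 𝒞, MapClusterPt (μ.real s ^ 2) atTop (meanReturnMeasure f μ s) := by
  have hMP : MeasurePreserving f μ μ ↔ ∀ s ∈ 𝒞, μ.real (f ⁻¹' s) = μ.real s := by
    rw [measurePreserving_iff_forall_measure_preimage_eq hf hgen hpi]
    exact forall₂_congr fun s _ ↦ (measureReal_eq_measureReal_iff).symm
  constructor
  · intro h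
    have hmp := h.toMeasurePreserving
    exact ⟨hMP.1 hmp, fun s hs ↦
      ((hmp.ergodic_iff_forall_tendsto_meanReturnMeasure hgen hpi).1 h s hs).mapClusterPt⟩
  · rintro ⟨hinv, hclust⟩
    have hmp := hMP.2 hinv
    refine (hmp.ergodic_iff_forall_tendsto_meanReturnMeasure hgen hpi).2 fun s hs ↦ ?_
    exact ((hmp.tendsto_meanReturnMeasure (hgen ▸ .basic s hs)).tendsto_nhds_iff_mapClusterPt).2
      (hclust s hs)

end MeasureTheory

theorem ProbabilityMeasure.continuous_measureReal_of_isClopen {X : Type*} [TopologicalSpace X]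
    [MeasurableSpace X] [OpensMeasurableSpace X] {C : Set X} (hC : IsClopen C) :
    Continuous fun P : ProbabilityMeasure X ↦ (P : Measure X).real C := by
  simpa only [BoundedContinuousFunction.indicator_apply,
    integral_indicator_one hC.isOpen.measurableSet] using
    ProbabilityMeasure.continuous_integral_boundedContinuousFunction
      (BoundedContinuousFunction.indicator C hC)

theorem isGδ_setOf_ergodic {X : Type*} [TopologicalSpace X] [MeasurableSpace X] [BorelSpace X]
    {T : X → X} (hT : Continuous T) {𝒞 : Set (Set X)} (hcount : 𝒞.Countable)
    (hclopen : ∀ C ∈ 𝒞, IsClopen C)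
    (hgen : ‹MeasurableSpace X› = MeasurableSpace.generateFrom 𝒞) (hpi : IsPiSystem 𝒞) :
    IsGδ {P : ProbabilityMeasure X | Ergodic T P} := by
  have hcont {C : Set X} (hC : IsClopen C) :=
    ProbabilityMeasure.continuous_measureReal_of_isClopen hC
  have hset : {P : ProbabilityMeasure X | Ergodic T P} =
      (⋂ C ∈ 𝒞, {P : ProbabilityMeasure X |
          (P : Measure X).real (T ⁻¹' C) = (P : Measure X).real C}) ∩
        ⋂ C ∈ 𝒞, {P : ProbabilityMeasure X |
          MapClusterPt ((P : Measure X).real C ^ 2) atTop (meanReturnMeasure T P C)} := by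
    ext P
    simpa only [mem_ofPred_eq, mem_inter_iff, mem_iInter] using
      ergodic_iff_forall_mapClusterPt_meanReturnMeasure hgen hpi hT.measurable
  rw [hset]
  refine .inter (.biInter hcount fun C hC ↦ ?_) (.biInter hcount fun C hC ↦ ?_)
  · exact isClosed_diagonal.isGδ.preimage
      ((hcont ((hclopen C hC).preimage hT)).prodMk (hcont (hclopen C hC)))
  · refine isGδ_setOf_mapClusterPt (fun N ↦ ?_) ((hcont (hclopen C hC)).pow 2)
    exact continuous_const.mul (continuous_finsetSum _ fun n _ ↦
      hcont (((hclopen C hC).preimage (hT.iterate n)).inter (hclopen C hC)))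

theorem MeasureTheory.countable_measurableCylinders {ι : Type*} [Countable ι] {α : ι → Type*}
    [∀ i, Finite (α i)] [∀ i, MeasurableSpace (α i)] : (measurableCylinders α).Countable := by
  unfold measurableCylinders
  exact countable_iUnion fun s ↦ countable_iUnion fun S ↦ countable_iUnion fun _ ↦
    countable_singleton _

theorem MeasureTheory.isClopen_of_mem_measurableCylinders {ι : Type*} {α : ι → Type*}
    [∀ i, MeasurableSpace (α i)] [∀ i, TopologicalSpace (α i)] [∀ i, DiscreteTopology (α i)]
    {C : Set (∀ i, α i)} (hC : C ∈ measurableCylinders α) : IsClopen C := by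
  obtain ⟨s, S, -, rfl⟩ := (mem_measurableCylinders C).1 hC
  exact (isClopen_discrete S).preimage (continuous_pi fun i ↦ continuous_apply _)

theorem continuous_shiftMap : Continuous shiftMap :=
  continuous_pi fun i ↦ continuous_apply (i + 1)

theorem ergodicStationaryMeasure_iff_ergodic {P : Measure (ℕ → Bool)} [IsProbabilityMeasure P] :
    ErgodicStationaryMeasure P ↔ Ergodic shiftMap P := by
  refine (and_congr (measurePreserving_iff_forall_measure_preimage_eq
    continuous_shiftMap.measurable MeasurableSpace.generateFrom_measurableSet.symm
    MeasurableSpace.isPiSystem_measurableSet).symm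
    preErgodic_iff_forall_measure_eq_zero_or_one.symm).trans ?_
  exact ⟨fun ⟨h, h'⟩ ↦ ⟨h, h'⟩, fun h ↦ ⟨h.toMeasurePreserving, h.toPreErgodic⟩⟩

/-- The set of stationary ergodic probability measures on Cantor space is a
`Gδ` subset of the space of all Borel probability measures with the weak
topology. -/
theorem ergodic_measures_Gdelta :
    IsGδ {P : ProbabilityMeasure (ℕ → Bool) |
      ErgodicStationaryMeasure (P : Measure (ℕ → Bool))} := by
  simp only [ergodicStationaryMeasure_iff_ergodic]
  exact isGδ_setOf_ergodic continuous_shiftMap countable_measurableCylinders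
    (fun _ ↦ isClopen_of_mem_measurableCylinders) generateFrom_measurableCylinders.symm
    isPiSystem_measurableCylinders
end

section
/- For every probability measure P on a measurable space and every measurable function d with values in [0, +∞) satisfying P({ω : d(ω) > r}) ≤ 2^{−r} for every real r ≥ 0, one has ∫ 2^{d(ω)} / (1 + d(ω))² dP(ω) ≤ 4. -/
open MeasureTheory
open scoped ENNReal

/-- If `d ≥ 0` satisfies the probability-bound `P(d > r) ≤ 2^{−r}` for all
`r ≥ 0`, then `∫ 2^d / (1 + d)² dP ≤ 4`: a probability-bounded randomness
deficiency becomes expectation-bounded after subtracting `2 log d`. -/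
theorem prob_bounded_gives_expectation_bounded {α : Type*} [MeasurableSpace α]
    (μ : Measure α) [IsProbabilityMeasure μ]
    (d : α → ℝ) (hd : Measurable d) (hd0 : ∀ ω, 0 ≤ d ω)
    (h : ∀ r : ℝ, 0 ≤ r → μ {ω | d ω > r} ≤ ENNReal.ofReal ((2 : ℝ) ^ (-r))) :
    ∫⁻ ω, ENNReal.ofReal ((2 : ℝ) ^ (d ω) / (1 + d ω) ^ 2) ∂μ ≤ 4 := by
  -- tail bound at integer points with non-strict inequality
  have tail : ∀ n : ℕ, μ {ω | (n : ℝ) ≤ d ω} ≤ ENNReal.ofReal ((2:ℝ) ^ (-(n:ℝ))) := by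
    intro n
    rcases Nat.eq_zero_or_pos n with h0 | hpos
    · subst h0
      have h1 : ENNReal.ofReal ((2:ℝ) ^ (-((0:ℕ):ℝ))) = 1 := by norm_num
      rw [h1]
      exact prob_le_one
    · have hn1 : (1:ℝ) ≤ n := by exact_mod_cast hpos
      have hcont : Continuous fun ε : ℝ => ENNReal.ofReal ((2:ℝ) ^ (-((n:ℝ) - ε))) := by
        apply ENNReal.continuous_ofReal.comp
        have : (fun ε : ℝ => (2:ℝ) ^ (-((n:ℝ) - ε)))
            = fun ε : ℝ => Real.exp (Real.log 2 * (-((n:ℝ) - ε))) := by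
          funext ε
          rw [Real.rpow_def_of_pos two_pos]
        rw [this]
        continuity
      have tend : Filter.Tendsto (fun ε : ℝ => ENNReal.ofReal ((2:ℝ) ^ (-((n:ℝ) - ε))))
          (nhdsWithin 0 (Set.Ioi 0)) (nhds (ENNReal.ofReal ((2:ℝ) ^ (-(n:ℝ))))) := by
        have h5 := (hcont.tendsto 0).mono_left
          (nhdsWithin_le_nhds (s := Set.Ioi (0:ℝ)))
        simpa using h5
      refine ge_of_tendsto tend ?_
      filter_upwards [Ioo_mem_nhdsGT_of_mem (Set.left_mem_Ico.mpr one_pos)] with ε hε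
      have hε0 : 0 < ε := hε.1
      have hεn : (0:ℝ) ≤ (n:ℝ) - ε := by linarith [hε.2]
      calc μ {ω | (n:ℝ) ≤ d ω} ≤ μ {ω | d ω > (n:ℝ) - ε} := by
            apply measure_mono
            intro ω hω
            simp only [Set.mem_setOf_eq] at *
            linarith
        _ ≤ ENNReal.ofReal ((2:ℝ) ^ (-((n:ℝ) - ε))) := h _ hεn
  set A : ℕ → Set α := fun n => {ω | (n:ℝ) ≤ d ω} ∩ {ω | d ω < (n:ℝ) + 1} with hA
  have hAm : ∀ n, MeasurableSet (A n) :=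
    fun n => (hd measurableSet_Ici).inter (hd measurableSet_Iio)
  have hdisj : Pairwise (Function.onFun Disjoint A) := by
    intro m n hmn
    rcases hmn.lt_or_gt with hlt | hlt
    · have hmn' : (m:ℝ) + 1 ≤ n := by exact_mod_cast hlt
      rw [Function.onFun, Set.disjoint_left]
      rintro ω ⟨h1, h2⟩ ⟨h3, h4⟩
      simp only [Set.mem_setOf_eq] at *
      linarith
    · have hmn' : (n:ℝ) + 1 ≤ m := by exact_mod_cast hlt
      rw [Function.onFun, Set.disjoint_left]
      rintro ω ⟨h1, h2⟩ ⟨h3, h4⟩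
      simp only [Set.mem_setOf_eq] at *
      linarith
  have hUnion : ⋃ n, A n = Set.univ := by
    ext ω
    simp only [hA, Set.mem_iUnion, Set.mem_univ, iff_true, Set.mem_inter_iff,
      Set.mem_setOf_eq]
    exact ⟨⌊d ω⌋₊, Nat.floor_le (hd0 ω), Nat.lt_floor_add_one _⟩
  -- summability of the dominating series
  have hsum : HasSum (fun n : ℕ => 2 / (1 + (n:ℝ)) ^ 2) (Real.pi ^ 2 / 3) := by
    have h1 : HasSum (fun n : ℕ => (1:ℝ) / ((n:ℝ) + 1) ^ 2) (Real.pi ^ 2 / 6) := by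
      have h2 := (hasSum_nat_add_iff (f := fun n : ℕ => (1:ℝ) / (n:ℝ) ^ 2) 1
        (g := Real.pi ^ 2 / 6)).mpr (by simpa using hasSum_zeta_two)
      have h3 : ∀ n : ℕ, (1:ℝ) / (((n + 1 : ℕ)):ℝ) ^ 2 = 1 / ((n:ℝ) + 1) ^ 2 := by
        intro n; push_cast; ring_nf
      simpa [h3] using h2
    have h4 := h1.mul_left 2
    have heq : (fun n : ℕ => 2 / (1 + (n:ℝ)) ^ 2)
        = fun n : ℕ => 2 * ((1:ℝ) / ((n:ℝ) + 1) ^ 2) := by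
      funext n; rw [add_comm 1 (n:ℝ)]; ring
    have hval : 2 * (Real.pi ^ 2 / 6) = Real.pi ^ 2 / 3 := by ring
    rw [heq]
    exact hval ▸ h4
  have hsummable : Summable (fun n : ℕ => 2 / (1 + (n:ℝ)) ^ 2) := hsum.summable
  calc ∫⁻ ω, ENNReal.ofReal ((2:ℝ) ^ (d ω) / (1 + d ω) ^ 2) ∂μ
      = ∫⁻ ω in ⋃ n, A n, ENNReal.ofReal ((2:ℝ) ^ (d ω) / (1 + d ω) ^ 2) ∂μ := by
        rw [hUnion, Measure.restrict_univ]
    _ = ∑' n, ∫⁻ ω in A n, ENNReal.ofReal ((2:ℝ) ^ (d ω) / (1 + d ω) ^ 2) ∂μ :=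
        lintegral_iUnion hAm hdisj _
    _ ≤ ∑' n : ℕ, ENNReal.ofReal (2 / (1 + (n:ℝ)) ^ 2) := by
        apply ENNReal.tsum_le_tsum
        intro n
        have hstep1 : ∫⁻ ω in A n, ENNReal.ofReal ((2:ℝ) ^ (d ω) / (1 + d ω) ^ 2) ∂μ
            ≤ ∫⁻ _ω in A n, ENNReal.ofReal ((2:ℝ) ^ ((n:ℝ) + 1) / (1 + (n:ℝ)) ^ 2) ∂μ := by
          apply setLIntegral_mono' (hAm n)
          rintro ω ⟨h1, h2⟩
          simp only [Set.mem_setOf_eq] at h1 h2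
          apply ENNReal.ofReal_le_ofReal
          have hnum : (2:ℝ) ^ (d ω) ≤ (2:ℝ) ^ ((n:ℝ) + 1) :=
            Real.rpow_le_rpow_of_exponent_le one_le_two h2.le
          have hden : (1 + (n:ℝ)) ^ 2 ≤ (1 + d ω) ^ 2 := by nlinarith [hd0 ω]
          exact div_le_div₀ (by positivity) hnum (by positivity) hden
        have hstep2 : ∫⁻ _ω in A n, ENNReal.ofReal ((2:ℝ) ^ ((n:ℝ) + 1) / (1 + (n:ℝ)) ^ 2) ∂μ
            = ENNReal.ofReal ((2:ℝ) ^ ((n:ℝ) + 1) / (1 + (n:ℝ)) ^ 2) * μ (A n) := by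
          simp [lintegral_const]
        have hstep3 : μ (A n) ≤ ENNReal.ofReal ((2:ℝ) ^ (-(n:ℝ))) :=
          le_trans (measure_mono Set.inter_subset_left) (tail n)
        calc ∫⁻ ω in A n, ENNReal.ofReal ((2:ℝ) ^ (d ω) / (1 + d ω) ^ 2) ∂μ
            ≤ ENNReal.ofReal ((2:ℝ) ^ ((n:ℝ) + 1) / (1 + (n:ℝ)) ^ 2) * μ (A n) :=
              hstep1.trans (le_of_eq hstep2)
          _ ≤ ENNReal.ofReal ((2:ℝ) ^ ((n:ℝ) + 1) / (1 + (n:ℝ)) ^ 2)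
              * ENNReal.ofReal ((2:ℝ) ^ (-(n:ℝ))) := mul_le_mul_right hstep3 _
          _ = ENNReal.ofReal (2 / (1 + (n:ℝ)) ^ 2) := by
              rw [← ENNReal.ofReal_mul (by positivity)]
              congr 1
              have h2n : (2:ℝ) ^ ((n:ℝ) + 1) * (2:ℝ) ^ (-(n:ℝ)) = 2 := by
                rw [← Real.rpow_add two_pos]
                norm_num
              field_simp
              nlinarith [h2n]
    _ = ENNReal.ofReal (∑' n : ℕ, 2 / (1 + (n:ℝ)) ^ 2) :=
        (ENNReal.ofReal_tsum_of_nonneg (fun n => by positivity) hsummable).symm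
    _ ≤ 4 := by
        rw [hsum.tsum_eq]
        have hpi : Real.pi < 3.15 := Real.pi_lt_d2
        have hpi0 : 0 < Real.pi := Real.pi_pos
        have : Real.pi ^ 2 / 3 ≤ 4 := by nlinarith
        calc ENNReal.ofReal (Real.pi ^ 2 / 3) ≤ ENNReal.ofReal 4 :=
              ENNReal.ofReal_le_ofReal this
          _ = 4 := by norm_num
end

section
/- Let X be a complete separable metric space and let f : X → ℝ be a bounded uniformly continuous function. Then the map P ↦ ∫ f dP, from the space of Borel probability measures on X equipped with the Lévy–Prokhorov metric to ℝ, is uniformly continuous. -/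
open MeasureTheory Set Metric ENNReal BoundedContinuousFunction

lemma aux_integral_le {X : Type*} [MetricSpace X] [MeasurableSpace X] [BorelSpace X]
    (P Q : Measure X) [IsProbabilityMeasure P] [IsProbabilityMeasure Q]
    (F : X →ᵇ ℝ) (F_nn : ∀ x, 0 ≤ F x) {ε' δ : ℝ} (ε'_pos : 0 < ε') (δ_pos : 0 < δ)
    (hmod : ∀ x y : X, dist x y < δ → |F x - F y| ≤ ε')
    (hPQ : levyProkhorovEDist P Q < ENNReal.ofReal δ) :
    ∫ x, F x ∂P ≤ (∫ x, F x ∂Q) + ε' + δ * ‖F‖ := by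
  have step1 := BoundedContinuousFunction.integral_le_of_levyProkhorovEDist_lt P Q δ_pos hPQ F
    (Filter.Eventually.of_forall F_nn)
  set G : X →ᵇ ℝ := F + BoundedContinuousFunction.const X ε' with hG
  have hGx : ∀ x, G x = F x + ε' := fun x => rfl
  have G_nn : ∀ x, 0 ≤ G x := fun x => by
    rw [hGx]; have := F_nn x; linarith
  have hFG : ‖F‖ ≤ ‖G‖ := by
    apply (BoundedContinuousFunction.norm_le (norm_nonneg G)).mpr
    intro x
    rw [Real.norm_eq_abs, abs_of_nonneg (F_nn x)]
    calc F x ≤ G x := by rw [hGx]; linarith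
      _ ≤ |G x| := le_abs_self _
      _ ≤ ‖G‖ := by rw [← Real.norm_eq_abs]; exact BoundedContinuousFunction.norm_coe_le_norm G x
  have subset_thick : ∀ t : ℝ, thickening δ {a | t ≤ F a} ⊆ {a | t ≤ G a} := by
    intro t x hx
    obtain ⟨y, hy, hxy⟩ := Metric.mem_thickening_iff.mp hx
    have h1 : |F x - F y| ≤ ε' := hmod x y hxy
    have h2 : t ≤ F y := hy
    have : F y - F x ≤ ε' := (abs_sub_le_iff.mp h1).2
    rw [mem_setOf_eq, hGx]; linarith
  -- integrability facts
  have intble_thick : IntegrableOn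
      (fun t ↦ ENNReal.toReal (Q (thickening δ {a | t ≤ F a}))) (Ioc 0 ‖F‖) := by
    apply Measure.integrableOn_of_bounded (M := ENNReal.toReal (Q univ)) measure_Ioc_lt_top.ne
    · apply (Measurable.ennreal_toReal (Antitone.measurable ?_)).aestronglyMeasurable
      exact fun _ _ hst ↦ measure_mono <| thickening_subset_of_subset δ (fun _ h ↦ hst.trans h)
    · apply Filter.Eventually.of_forall <| fun t ↦ ?_
      simp only [Real.norm_eq_abs, abs_toReal]
      exact ENNReal.toReal_mono (measure_ne_top _ _) <| measure_mono (subset_univ _)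
  have intble_G : ∀ s : Set ℝ, IntegrableOn
      (fun t ↦ ENNReal.toReal (Q {a | t ≤ G a})) s (volume) → True := fun _ _ => trivial
  have intble_G2 : IntegrableOn (fun t ↦ ENNReal.toReal (Q {a | t ≤ G a})) (Ioc 0 ‖G‖) := by
    apply Measure.integrableOn_of_bounded (M := ENNReal.toReal (Q univ)) measure_Ioc_lt_top.ne
    · apply (Measurable.ennreal_toReal (Antitone.measurable ?_)).aestronglyMeasurable
      exact fun _ _ hst ↦ measure_mono (fun _ h ↦ hst.trans h)
    · apply Filter.Eventually.of_forall <| fun t ↦ ?_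
      simp only [Real.norm_eq_abs, abs_toReal]
      exact ENNReal.toReal_mono (measure_ne_top _ _) <| measure_mono (subset_univ _)
  have step2 : (∫ t in Ioc 0 ‖F‖, ENNReal.toReal (Q (thickening δ {a | t ≤ F a})))
      ≤ ∫ t in Ioc 0 ‖F‖, ENNReal.toReal (Q {a | t ≤ G a}) := by
    apply setIntegral_mono intble_thick (intble_G2.mono_set (Ioc_subset_Ioc le_rfl hFG))
    intro t
    exact ENNReal.toReal_mono (measure_ne_top _ _) (measure_mono (subset_thick t))
  have step3 : (∫ t in Ioc 0 ‖F‖, ENNReal.toReal (Q {a | t ≤ G a}))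
      ≤ ∫ t in Ioc 0 ‖G‖, ENNReal.toReal (Q {a | t ≤ G a}) := by
    apply setIntegral_mono_set intble_G2
    · exact Filter.Eventually.of_forall (fun t ↦ ENNReal.toReal_nonneg)
    · exact HasSubset.Subset.eventuallyLE (Ioc_subset_Ioc le_rfl hFG)
  have step4 : (∫ t in Ioc 0 ‖G‖, ENNReal.toReal (Q {a | t ≤ G a})) = ∫ x, G x ∂Q :=
    (BoundedContinuousFunction.integral_eq_integral_meas_le G Q
      (Filter.Eventually.of_forall G_nn)).symm
  have step5 : ∫ x, G x ∂Q = (∫ x, F x ∂Q) + ε' := by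
    simp only [hGx]
    rw [integral_add (F.integrable Q) (integrable_const ε'), integral_const]
    simp
  have := step1.trans (by linarith : (∫ t in Ioc 0 ‖F‖,
    ENNReal.toReal (Q (thickening δ {a | t ≤ F a}))) + δ * ‖F‖ ≤ (∫ x, F x ∂Q) + ε' + δ * ‖F‖)
  linarith [this]


/-- For a bounded uniformly continuous `f : X → ℝ` on a complete separable
metric space, the map `P ↦ ∫ f dP` is uniformly continuous with respect to the
Lévy–Prokhorov distance on probability measures. -/
theorem integral_uniformContinuous_levyProkhorov {X : Type*} [MetricSpace X]
    [CompleteSpace X] [TopologicalSpace.SeparableSpace X]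
    [MeasurableSpace X] [BorelSpace X]
    (f : X → ℝ) (hf : UniformContinuous f) (hbdd : ∃ C : ℝ, ∀ x, |f x| ≤ C) :
    ∀ ε : ℝ, 0 < ε → ∃ δ : ℝ, 0 < δ ∧
      ∀ P Q : ProbabilityMeasure X,
        levyProkhorovDist (P : Measure X) (Q : Measure X) < δ →
        |(∫ x, f x ∂(P : Measure X)) - ∫ x, f x ∂(Q : Measure X)| < ε := by
  obtain ⟨C, hC⟩ := hbdd
  set C' : ℝ := max C 0 with hC'def
  have hC' : ∀ x, |f x| ≤ C' := fun x => (hC x).trans (le_max_left _ _)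
  have hC'0 : 0 ≤ C' := le_max_right _ _
  set F : X →ᵇ ℝ := BoundedContinuousFunction.ofNormedAddCommGroup
    (fun x => f x + C') (hf.continuous.add continuous_const) (2 * C')
    (fun x => by
      have h := abs_le.mp (hC' x)
      show ‖f x + C'‖ ≤ 2 * C'
      rw [Real.norm_eq_abs, abs_le]
      exact ⟨by linarith [h.1], by linarith [h.2]⟩) with hF
  have hFx : ∀ x, F x = f x + C' := fun _ => rfl
  have F_nn : ∀ x, 0 ≤ F x := fun x => by
    rw [hFx]; have := abs_le.mp (hC' x); linarith
  intro ε ε_pos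
  obtain ⟨δ₀, δ₀_pos, hδ₀⟩ := Metric.uniformContinuous_iff.mp hf (ε/4) (by linarith)
  refine ⟨min δ₀ (ε/(2*(‖F‖+1))), lt_min δ₀_pos (by positivity), ?_⟩
  set δ := min δ₀ (ε/(2*(‖F‖+1))) with hδdef
  have δ_pos : 0 < δ := lt_min δ₀_pos (by positivity)
  intro P Q hPQ
  have hedist : levyProkhorovEDist (P : Measure X) (Q : Measure X) < ENNReal.ofReal δ := by
    rw [ENNReal.lt_ofReal_iff_toReal_lt (levyProkhorovEDist_ne_top _ _)]
    exact hPQ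
  have hmod : ∀ x y : X, dist x y < δ → |F x - F y| ≤ ε/4 := by
    intro x y hxy
    have : dist (f x) (f y) < ε/4 := hδ₀ (hxy.trans_le (min_le_left _ _))
    rw [Real.dist_eq] at this
    have : |f x - f y| ≤ ε/4 := this.le
    simpa [hFx] using this
  have h1 := aux_integral_le (P : Measure X) (Q : Measure X) F F_nn (by linarith : (0:ℝ) < ε/4)
    δ_pos hmod hedist
  have h2 := aux_integral_le (Q : Measure X) (P : Measure X) F F_nn (by linarith : (0:ℝ) < ε/4)
    δ_pos (fun x y h => hmod x y h) (levyProkhorovEDist_comm (P : Measure X) (Q : Measure X) ▸ hedist)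
  have hδF : δ * ‖F‖ ≤ ε / 2 := by
    have h3 : δ ≤ ε/(2*(‖F‖+1)) := min_le_right _ _
    have h4 : (0:ℝ) ≤ ‖F‖ := norm_nonneg F
    rw [le_div_iff₀ (by positivity)] at h3
    nlinarith [mul_nonneg δ_pos.le h4]
  -- relate integrals of f and F
  have hf_int : ∀ μ : Measure X, IsProbabilityMeasure μ → Integrable f μ := by
    intro μ hμ
    have : f = fun x => F x - C' := by funext x; rw [hFx]; ring
    rw [this]
    exact (F.integrable μ).sub (integrable_const C')
  have key : ∀ μ : Measure X, IsProbabilityMeasure μ → ∫ x, F x ∂μ = (∫ x, f x ∂μ) + C' := by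
    intro μ hμ
    simp only [hFx]
    rw [integral_add (hf_int μ hμ) (integrable_const C'), integral_const]
    simp
  have kP := key (P : Measure X) inferInstance
  have kQ := key (Q : Measure X) inferInstance
  rw [abs_sub_lt_iff]
  constructor <;> nlinarith [h1, h2, kP, kQ, hδF]
end
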